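/- arXiv:1710.11606 — 2 statements merged into one kernel-verified Lean document; each statement's English description precedes it below -/
import Mathlib

section
/- For every integer T ≥ 1 and every x ∈ ℝ^T, f̄_T(0) − f̄_T(x) ≤ 12T; in particular f̄_T(0) − inf_x f̄_T(x) ≤ 12T. -/
/-- Ψ(x) = 0 for x ≤ 1/2 and Ψ(x) = exp(1 − 1/(2x−1)²) for x > 1/2. -/
noncomputable def Psi (x : ℝ) : ℝ :=
  if x ≤ 1/2 then 0 else Real.exp (1 - 1/(2*x - 1)^2)

/-- Φ(x) = √e · ∫_{−∞}^x exp(−t²/2) dt. -/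
noncomputable def Phi (x : ℝ) : ℝ :=
  Real.sqrt (Real.exp 1) * ∫ t in Set.Iic x, Real.exp (-t^2/2)

/-- 0-based coordinates of `x : ℝ^T` extended by zero. -/
noncomputable def pad (T : ℕ) (x : Fin T → ℝ) (i : ℕ) : ℝ :=
  if h : i < T then x ⟨i, h⟩ else 0

/-- f̄_T(x) = −Ψ(1)Φ(x_1) + Σ_{i=2}^T [Ψ(−x_{i−1})Φ(−x_i) − Ψ(x_{i−1})Φ(x_i)]. -/
noncomputable def fbar (T : ℕ) (x : Fin T → ℝ) : ℝ :=
  -(Psi 1 * Phi (pad T x 0)) +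
    ∑ i ∈ Finset.Ico 1 T,
      (Psi (-(pad T x (i-1))) * Phi (-(pad T x i)) - Psi (pad T x (i-1)) * Phi (pad T x i))

lemma psi_nonneg (x : ℝ) : 0 ≤ Psi x := by
  unfold Psi; split
  · exact le_refl 0
  · exact (Real.exp_pos _).le

lemma psi_le (x : ℝ) : Psi x ≤ Real.exp 1 := by
  unfold Psi; split
  · exact (Real.exp_pos _).le
  · apply Real.exp_le_exp.mpr
    have : (0:ℝ) ≤ 1/(2*x-1)^2 := by positivity
    linarith

lemma phi_nonneg (x : ℝ) : 0 ≤ Phi x := by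
  unfold Phi
  apply mul_nonneg (Real.sqrt_nonneg _)
  apply MeasureTheory.integral_nonneg
  intro t; positivity

lemma integ : MeasureTheory.Integrable (fun t : ℝ => Real.exp (-t^2/2)) := by
  have := integrable_exp_neg_mul_sq (show (0:ℝ) < 1/2 by norm_num)
  convert this using 2 with t
  ring_nf

lemma phi_le (x : ℝ) : Phi x ≤ Real.sqrt (Real.exp 1) * Real.sqrt (2 * Real.pi) := by
  unfold Phi
  apply mul_le_mul_of_nonneg_left _ (Real.sqrt_nonneg _)
  have h1 : (∫ t in Set.Iic x, Real.exp (-t^2/2)) ≤ ∫ t : ℝ, Real.exp (-t^2/2) := by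
    apply MeasureTheory.setIntegral_le_integral integ
    filter_upwards with t using by positivity
  have h2 : (∫ t : ℝ, Real.exp (-t^2/2)) = Real.sqrt (2 * Real.pi) := by
    have := integral_gaussian (1/2 : ℝ)
    rw [show Real.pi / (1/2) = 2 * Real.pi by ring] at this
    rw [← this]
    congr 1 with t; ring_nf
  linarith [h1, h2.le]

lemma prod_le (a b : ℝ) : Psi a * Phi b ≤ 12 := by
  have h1 := psi_le a
  have h2 := phi_le b
  have h3 := phi_nonneg b
  have h4 := psi_nonneg a
  have he : Real.exp 1 ≤ 2.7182818286 := Real.exp_one_lt_d9.le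
  have hse : Real.sqrt (Real.exp 1) ≤ 1.65 := by
    rw [show (1.65:ℝ) = Real.sqrt (1.65^2) from (Real.sqrt_sq (by norm_num)).symm]
    exact Real.sqrt_le_sqrt (by nlinarith)
  have hsp : Real.sqrt (2 * Real.pi) ≤ 2.51 := by
    rw [show (2.51:ℝ) = Real.sqrt (2.51^2) from (Real.sqrt_sq (by norm_num)).symm]
    exact Real.sqrt_le_sqrt (by nlinarith [Real.pi_lt_d2])
  nlinarith [Real.sqrt_nonneg (Real.exp 1), Real.sqrt_nonneg (2*Real.pi)]

/-- For every `T ≥ 1` and every `x ∈ ℝ^T`, f̄_T(0) − f̄_T(x) ≤ 12T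
(in particular f̄_T(0) − inf f̄_T ≤ 12T). -/
theorem stmt10 (T : ℕ) (hT : 1 ≤ T) (x : Fin T → ℝ) :
    fbar T 0 - fbar T x ≤ 12 * T := by
  have hpad0 : ∀ i, pad T (0 : Fin T → ℝ) i = 0 := by
    intro i; unfold pad; split <;> simp
  have hpsi0 : Psi 0 = 0 := by unfold Psi; norm_num
  have h0 : fbar T 0 ≤ 0 := by
    unfold fbar
    have : ∀ i ∈ Finset.Ico 1 T,
        (Psi (-(pad T (0:Fin T → ℝ) (i-1))) * Phi (-(pad T (0:Fin T → ℝ) i)) -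
         Psi (pad T (0:Fin T → ℝ) (i-1)) * Phi (pad T (0:Fin T → ℝ) i)) = 0 := by
      intro i _
      simp [hpad0, hpsi0]
    rw [Finset.sum_congr rfl this]
    simp only [Finset.sum_const_zero, add_zero]
    have := mul_nonneg (psi_nonneg 1) (phi_nonneg (pad T (0:Fin T → ℝ) 0))
    linarith
  have hx : (-(12 : ℝ)) * T ≤ fbar T x := by
    unfold fbar
    have h1 : (-(12:ℝ)) ≤ -(Psi 1 * Phi (pad T x 0)) := by
      have := prod_le 1 (pad T x 0); linarith
    have h2 : ∀ i ∈ Finset.Ico 1 T,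
        (-(12:ℝ)) ≤ Psi (-(pad T x (i-1))) * Phi (-(pad T x i)) -
          Psi (pad T x (i-1)) * Phi (pad T x i) := by
      intro i _
      have := prod_le (pad T x (i-1)) (pad T x i)
      have := mul_nonneg (psi_nonneg (-(pad T x (i-1)))) (phi_nonneg (-(pad T x i)))
      linarith
    have h3 := Finset.card_nsmul_le_sum (Finset.Ico 1 T) _ _ h2
    have hcard : (Finset.Ico 1 T).card = T - 1 := by simp
    rw [hcard] at h3
    have hc : ((T - 1 : ℕ) : ℝ) = (T : ℝ) - 1 := by
      rw [Nat.cast_sub hT]; norm_num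
    have h3' : (-(12:ℝ)) * ((T:ℝ) - 1) ≤ ∑ i ∈ Finset.Ico 1 T,
        (Psi (-(pad T x (i-1))) * Phi (-(pad T x i)) -
         Psi (pad T x (i-1)) * Phi (pad T x i)) := by
      calc (-(12:ℝ)) * ((T:ℝ) - 1) = (T - 1 : ℕ) • (-(12:ℝ)) := by
            rw [nsmul_eq_mul, hc]; ring
        _ ≤ _ := h3
    linarith
  linarith
end

section
/- Let T ≥ 1 be an integer and define h̄_T : ℝ^T → ℝ by h̄_T(x) = Ψ(1 − (25/2)·‖x − (4/5)e^{(T)}‖²), where e^{(T)} is the T-th standard basis vector. Then: (i) h̄_T((4/5)e^{(T)}) = 1 and 0 ≤ h̄_T(x) ≤ 1 for all x; (ii) h̄_T(x) = 0 for every x with x_T ≤ 3/5 or ‖x‖ ≥ 1; and (iii) there exists a numerical constant c < ∞, independent of T and p, such that for every integer p ≥ 1 the p-th order derivatives of h̄_T are exp(3p·log p + c·p)-Lipschitz continuous. -/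
noncomputable def hbar (T : ℕ) (hT : 1 ≤ T) (x : EuclideanSpace ℝ (Fin T)) : ℝ :=
  Psi (1 - (25/2) * ‖x - (4/5 : ℝ) • EuclideanSpace.single ⟨T-1, by omega⟩ 1‖^2)

noncomputable def dirFun {n : ℕ} (g : EuclideanSpace ℝ (Fin n) → ℝ)
    (x v : EuclideanSpace ℝ (Fin n)) (t : ℝ) : ℝ :=
  g (x + t • v)

def HasLipschitzDerivs {n : ℕ} (p : ℕ) (L : ℝ) (g : EuclideanSpace ℝ (Fin n) → ℝ) : Prop :=
  ∀ x v : EuclideanSpace ℝ (Fin n), ‖v‖ = 1 → ∀ t t' : ℝ,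
    |iteratedDeriv p (dirFun g x v) t - iteratedDeriv p (dirFun g x v) t'| ≤ L * |t - t'|

open Real Filter Topology Polynomial Finset
open scoped Nat InnerProductSpace

lemma abs_coeff_derivative_le {p : ℝ[X]} {N : ℕ} {B : ℝ} (hp : p.natDegree ≤ N)
    (hB : ∀ m, |p.coeff m| ≤ B) (m : ℕ) : |(derivative p).coeff m| ≤ N * B := by
  have hB0 : 0 ≤ B := (abs_nonneg _).trans (hB 0)
  rw [coeff_derivative, abs_mul, mul_comm (N : ℝ)]
  rcases le_or_gt (m + 1) N with hm | hm
  · rw [abs_of_nonneg (a := (m : ℝ) + 1) (by positivity)]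
    exact mul_le_mul (hB _) (by exact_mod_cast hm) (by positivity) hB0
  · rw [coeff_eq_zero_of_natDegree_lt (by omega), abs_zero, zero_mul]
    positivity

lemma abs_eval_le_of_abs_coeff_le {p : ℝ[X]} {N : ℕ} {B u : ℝ} (hp : p.natDegree ≤ N)
    (hB : ∀ m, |p.coeff m| ≤ B) (hu : 1 ≤ u) : |p.eval u| ≤ (N + 1) * B * u ^ N := by
  have hB0 : 0 ≤ B := (abs_nonneg _).trans (hB 0)
  rw [eval_eq_sum_range' (Nat.lt_succ_of_le hp)]
  refine (abs_sum_le_sum_abs _ _).trans ?_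
  calc ∑ m ∈ range (N + 1), |p.coeff m * u ^ m| ≤ ∑ m ∈ range (N + 1), B * u ^ N := by
        refine sum_le_sum fun m hm => ?_
        rw [abs_mul, abs_of_nonneg (a := u ^ m) (by positivity)]
        exact mul_le_mul (hB m) (pow_le_pow_right₀ hu (by simpa [Nat.lt_succ_iff] using hm))
          (by positivity) hB0
    _ = (N + 1) * B * u ^ N := by simp; ring

lemma pow_le_factorial_mul_exp {x : ℝ} (hx : 0 ≤ x) (m : ℕ) : x ^ m ≤ m ! * exp x := by
  have := pow_div_factorial_le_exp x hx m
  rwa [div_le_iff₀ (by positivity), mul_comm] at this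

lemma hasDerivAt_zero_of_abs_le_sq {f : ℝ → ℝ} {x C : ℝ}
    (h : ∀ᶠ y in 𝓝 x, |f y| ≤ C * (y - x) ^ 2) : HasDerivAt f 0 x := by
  have hfx : f x = 0 := by simpa using h.self_of_nhds
  rw [hasDerivAt_iff_isLittleO, hfx]
  simp only [sub_zero, smul_zero]
  refine Asymptotics.IsBigO.trans_isLittleO ?_ (Asymptotics.isLittleO_pow_sub_sub x one_lt_two)
  refine Asymptotics.IsBigO.of_bound C (h.mono fun y hy => ?_)
  simpa [Real.norm_eq_abs, sq_abs] using hy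

lemma abs_sub_le_of_abs_iteratedDeriv_succ_le {f : ℝ → ℝ} {p : ℕ} {L : ℝ}
    (hf : Differentiable ℝ (iteratedDeriv p f)) (hL : ∀ t, |iteratedDeriv (p + 1) f t| ≤ L)
    (t t' : ℝ) : |iteratedDeriv p f t - iteratedDeriv p f t'| ≤ L * |t - t'| := by
  simpa [iteratedDeriv_succ] using Convex.norm_image_sub_le_of_norm_deriv_le
    (fun s _ => hf s) (fun s _ => by simpa [iteratedDeriv_succ] using hL s) convex_univ
    (Set.mem_univ t') (Set.mem_univ t)

lemma norm_add_smul_sq {E : Type*} [NormedAddCommGroup E] [InnerProductSpace ℝ E] (y : E) {v : E}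
    (hv : ‖v‖ = 1) (t : ℝ) : ‖y + t • v‖ ^ 2 = (t + ⟪y, v⟫_ℝ) ^ 2 + (‖y‖ ^ 2 - ⟪y, v⟫_ℝ ^ 2) := by
  rw [norm_add_sq_real, real_inner_smul_right, norm_smul, hv, mul_one, Real.norm_eq_abs, sq_abs]
  ring

/-- With `u = w⁻¹`, the `w`-derivative of `exp (1 - u²) * P u` is
`exp (1 - u²) * (2 u³ P u - u² P' u)`. -/
noncomputable def psiPoly : ℕ → ℝ[X]
  | 0 => 1
  | k + 1 => 2 * X ^ 3 * psiPoly k - X ^ 2 * derivative (psiPoly k)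

lemma natDegree_psiPoly_le (k : ℕ) : (psiPoly k).natDegree ≤ 3 * k := by
  induction k with
  | zero => simp [psiPoly]
  | succ k ih =>
    rw [psiPoly]
    refine (natDegree_sub_le _ _).trans (max_le ?_ ?_)
    · refine natDegree_mul_le.trans ?_
      have : (2 * X ^ 3 : ℝ[X]).natDegree ≤ 3 :=
        natDegree_mul_le.trans (by simp)
      omega
    · refine natDegree_mul_le.trans ?_
      have := natDegree_derivative_le (psiPoly k)
      simp only [natDegree_X_pow]
      omega

lemma abs_coeff_psiPoly_le (k m : ℕ) : |(psiPoly k).coeff m| ≤ 3 ^ k * (k ! : ℝ) := by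
  induction k generalizing m with
  | zero => by_cases hm : m = 0 <;> simp [psiPoly, coeff_one, hm]
  | succ k ih =>
    have h3 : |(X ^ 3 * psiPoly k).coeff m| ≤ 3 ^ k * (k ! : ℝ) := by
      rw [coeff_X_pow_mul']
      split_ifs
      · exact ih _
      · simp only [abs_zero]; positivity
    have h2 : |(X ^ 2 * derivative (psiPoly k)).coeff m| ≤ 3 * k * (3 ^ k * (k ! : ℝ)) := by
      rw [coeff_X_pow_mul']
      split_ifs
      · exact_mod_cast abs_coeff_derivative_le (natDegree_psiPoly_le k) ih _
      · simp only [abs_zero]; positivity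
    rw [psiPoly, mul_assoc, coeff_sub, show (2 : ℝ[X]) = C 2 by rfl, coeff_C_mul]
    calc |2 * (X ^ 3 * psiPoly k).coeff m - (X ^ 2 * derivative (psiPoly k)).coeff m|
        ≤ 2 * (3 ^ k * (k ! : ℝ)) + 3 * k * (3 ^ k * k !) := by
          refine (abs_sub _ _).trans (add_le_add ?_ h2)
          rw [abs_mul, abs_two]; linarith
      _ ≤ 3 ^ (k + 1) * ((k + 1) ! : ℝ) := by
          rw [Nat.factorial_succ, pow_succ]; push_cast
          nlinarith [show (0 : ℝ) ≤ 3 ^ k * (k ! : ℝ) by positivity]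

/-- The `k`-th derivative of `w ↦ Psi ((w + 1) / 2)`. -/
noncomputable def psiDeriv (k : ℕ) (w : ℝ) : ℝ :=
  if 0 < w then exp (1 - (w⁻¹) ^ 2) * (psiPoly k).eval w⁻¹ else 0

lemma Psi_eq_psiDeriv_zero (y : ℝ) : Psi y = psiDeriv 0 (2 * y - 1) := by
  unfold Psi psiDeriv
  split_ifs with h₁ h₂ h₂
  · linarith
  · rfl
  · simp [psiPoly, one_div, inv_pow]
  · linarith

lemma hasDerivAt_psiDeriv_of_pos (k : ℕ) {w : ℝ} (hw : 0 < w) :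
    HasDerivAt (psiDeriv k) (psiDeriv (k + 1) w) w := by
  have hinv := hasDerivAt_inv hw.ne'
  have hexp := ((hinv.fun_pow 2).const_sub 1).exp
  have hpoly := (Polynomial.hasDerivAt (psiPoly k) w⁻¹).comp w hinv
  have heq : psiDeriv k =ᶠ[𝓝 w] fun v => exp (1 - (v⁻¹) ^ 2) * (psiPoly k).eval v⁻¹ :=
    (eventually_gt_nhds hw).mono fun v hv => if_pos hv
  refine (hexp.fun_mul hpoly).congr_of_eventuallyEq heq |>.congr_deriv ?_
  rw [psiDeriv, if_pos hw, psiPoly]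
  simp only [eval_sub, eval_mul, eval_pow, eval_X, eval_ofNat, Function.comp_apply,
    ← inv_pow]
  ring

lemma exp_one_mul_factorial_mul_factorial_le (k : ℕ) :
    exp 1 * ((3 * k + 1) * (3 ^ k * k !)) * (2 * k + 1) ! ≤ (6 * (k + 1) : ℝ) ^ (3 * (k + 1)) := by
  obtain ⟨K, hK⟩ : ∃ K, K = k + 1 := ⟨_, rfl⟩
  have hnat : 9 * K * 3 ^ k * (k ! * (2 * k + 1) !) ≤ (6 * K) ^ (3 * K) := by
    have hfac : k ! * (2 * k + 1) ! ≤ K ^ K * (2 * K) ^ (2 * K) :=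
      Nat.mul_le_mul ((Nat.factorial_le_pow k).trans ((Nat.pow_le_pow_left (by omega) k).trans
        (Nat.pow_le_pow_right (by omega) (by omega))))
        ((Nat.factorial_le_pow _).trans ((Nat.pow_le_pow_left (by omega) _).trans
          (Nat.pow_le_pow_right (by omega) (by omega))))
    have hconst : 9 * K * 3 ^ k * 4 ^ K ≤ 216 ^ K := by
      calc 9 * K * 3 ^ k * 4 ^ K ≤ 9 ^ K * 2 ^ K * 3 ^ K * 4 ^ K := by
            gcongr
            · exact Nat.le_self_pow (by omega) 9
            · exact Nat.lt_two_pow_self.le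
            · omega
            · omega
        _ = 216 ^ K := by rw [← mul_pow, ← mul_pow, ← mul_pow]; norm_num
    calc 9 * K * 3 ^ k * (k ! * (2 * k + 1) !) ≤ 9 * K * 3 ^ k * (K ^ K * (2 * K) ^ (2 * K)) := by
          gcongr
      _ = 9 * K * 3 ^ k * 4 ^ K * K ^ (3 * K) := by rw [mul_pow, pow_mul 2]; ring
      _ ≤ 216 ^ K * K ^ (3 * K) := by gcongr
      _ = (6 * K) ^ (3 * K) := by rw [mul_pow, pow_mul 6]; norm_num
  have hreal : (9 * K * 3 ^ k * (k ! * (2 * k + 1) !) : ℝ) ≤ (6 * K : ℝ) ^ (3 * K) := by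
    exact_mod_cast hnat
  subst hK
  push_cast at hreal
  calc exp 1 * ((3 * k + 1) * (3 ^ k * k !)) * (2 * k + 1) !
      ≤ 3 * ((3 * (k + 1)) * (3 ^ k * k !)) * (2 * k + 1) ! := by
        gcongr
        · exact exp_one_lt_d9.le.trans (by norm_num)
        · linarith
    _ = 9 * (k + 1) * 3 ^ k * (k ! * (2 * k + 1) !) := by ring
    _ ≤ _ := hreal

lemma abs_psiDeriv_le (k : ℕ) {w : ℝ} (hw : w ≤ 1) :
    |psiDeriv k w| ≤ (6 * (k + 1) : ℝ) ^ (3 * (k + 1)) * w ^ 2 := by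
  unfold psiDeriv
  split_ifs with hw₀
  swap
  · rw [abs_zero]; positivity
  set u := w⁻¹
  have hu : 1 ≤ u := one_le_inv₀ hw₀ |>.mpr hw
  have hpoly : |(psiPoly k).eval u| ≤ (3 * k + 1) * (3 ^ k * k !) * u ^ (3 * k) := by
    exact_mod_cast abs_eval_le_of_abs_coeff_le (natDegree_psiPoly_le k) (abs_coeff_psiPoly_le k) hu
  have hgauss : u ^ (3 * k) ≤ (2 * k + 1) ! * exp (u ^ 2) * w ^ 2 := by
    have huw : u ^ 2 * w ^ 2 = 1 := by rw [← mul_pow, inv_mul_cancel₀ hw₀.ne', one_pow]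
    calc u ^ (3 * k) = u ^ (3 * k) * (u ^ 2 * w ^ 2) := by rw [huw, mul_one]
      _ = u ^ (3 * k + 2) * w ^ 2 := by ring
      _ ≤ (u ^ 2) ^ (2 * k + 1) * w ^ 2 := by
          rw [← pow_mul]; gcongr; omega
      _ ≤ (2 * k + 1) ! * exp (u ^ 2) * w ^ 2 := by
          gcongr; exact_mod_cast pow_le_factorial_mul_exp (by positivity) _
  rw [abs_mul, abs_of_pos (exp_pos _), sub_eq_add_neg, exp_add]
  calc exp 1 * exp (-u ^ 2) * |(psiPoly k).eval u|
      ≤ exp 1 * exp (-u ^ 2) * ((3 * k + 1) * (3 ^ k * k !) * u ^ (3 * k)) := by gcongr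
    _ ≤ exp 1 * exp (-u ^ 2) *
          ((3 * k + 1) * (3 ^ k * k !) * ((2 * k + 1) ! * exp (u ^ 2) * w ^ 2)) := by
        gcongr
    _ = exp 1 * ((3 * k + 1) * (3 ^ k * k !)) * (2 * k + 1) ! * w ^ 2 := by
        rw [exp_neg]; field_simp
    _ ≤ _ := by gcongr; exact exp_one_mul_factorial_mul_factorial_le k

lemma hasDerivAt_psiDeriv (k : ℕ) (w : ℝ) :
    HasDerivAt (psiDeriv k) (psiDeriv (k + 1) w) w := by
  rcases lt_trichotomy w 0 with hw | rfl | hw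
  · have heq : psiDeriv k =ᶠ[𝓝 w] fun _ => 0 :=
      (eventually_lt_nhds hw).mono fun v hv => if_neg hv.not_gt
    rw [psiDeriv, if_neg hw.not_gt]
    exact (hasDerivAt_const w 0).congr_of_eventuallyEq heq
  · rw [psiDeriv, if_neg (lt_irrefl 0)]
    refine hasDerivAt_zero_of_abs_le_sq (C := (6 * (k + 1) : ℝ) ^ (3 * (k + 1)))
      ((eventually_lt_nhds one_pos).mono fun v hv => ?_)
    simpa using abs_psiDeriv_le k hv.le
  · exact hasDerivAt_psiDeriv_of_pos k hw

lemma abs_psiDeriv_le_pow (k : ℕ) {w : ℝ} (hw : w ≤ 1) :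
    |psiDeriv k w| ≤ (6 * (k + 1) : ℝ) ^ (3 * (k + 1)) := by
  rcases le_or_gt w 0 with hw₀ | hw₀
  · rw [psiDeriv, if_neg hw₀.not_gt, abs_zero]; positivity
  calc |psiDeriv k w| ≤ (6 * (k + 1) : ℝ) ^ (3 * (k + 1)) * w ^ 2 := abs_psiDeriv_le k hw
    _ ≤ (6 * (k + 1) : ℝ) ^ (3 * (k + 1)) * 1 := by gcongr; nlinarith
    _ = _ := mul_one _

/-- The `n`-th derivative of `F ∘ q` for quadratic `q` (`q'' = a`) is
`∑ i, faaCoeff a n i * F⁽ⁿ⁻ⁱ⁾ (q) * q' ^ (n - 2 i)`; see `iteratedDeriv_comp_eq_faaDiBrunoSum`. -/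
noncomputable def faaCoeff (a : ℝ) : ℕ → ℕ → ℝ
  | _, 0 => 1
  | 0, _ + 1 => 0
  | n + 1, i + 1 => faaCoeff a n (i + 1) + a * (n - 2 * i : ℕ) * faaCoeff a n i

lemma faaCoeff_eq_zero {a : ℝ} {n i : ℕ} (h : n < 2 * i) : faaCoeff a n i = 0 := by
  induction n generalizing i with
  | zero => obtain ⟨i, rfl⟩ := Nat.exists_eq_succ_of_ne_zero (by omega : i ≠ 0); rfl
  | succ n ih =>
    obtain ⟨i, rfl⟩ := Nat.exists_eq_succ_of_ne_zero (by omega : i ≠ 0)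
    rw [faaCoeff, ih (by omega)]
    rcases Nat.lt_or_ge n (2 * i) with h' | h'
    · rw [ih h', mul_zero, add_zero]
    · rw [show n - 2 * i = 0 by omega]; simp

lemma abs_faaCoeff_le (a : ℝ) (n i : ℕ) : |faaCoeff a n i| ≤ 2 ^ n * (|a| * (n + 1)) ^ i := by
  induction n generalizing i with
  | zero => cases i <;> simp [faaCoeff]
  | succ n ih =>
    cases i with
    | zero => simp [faaCoeff]; exact one_le_pow₀ one_le_two
    | succ i =>
      have hsub : ((n - 2 * i : ℕ) : ℝ) ≤ n + 2 := by
        exact_mod_cast (Nat.sub_le n _).trans (by omega)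
      have hP : (|a| * (n + 1)) ^ i ≤ (|a| * (n + 2)) ^ i := by gcongr; linarith
      have hr : |a| * (n + 1) ≤ |a| * (n + 2) := by gcongr; linarith
      rw [faaCoeff]
      calc |faaCoeff a n (i + 1) + a * (n - 2 * i : ℕ) * faaCoeff a n i|
          ≤ 2 ^ n * ((|a| * (n + 1)) ^ i * (|a| * (n + 1))) +
              |a| * (n + 2) * (2 ^ n * (|a| * (n + 1)) ^ i) := by
            refine (abs_add_le _ _).trans (add_le_add ((ih _).trans_eq (by ring)) ?_)
            rw [abs_mul, abs_mul, Nat.abs_cast]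
            gcongr
            exact ih i
        _ ≤ 2 ^ n * ((|a| * (n + 2)) ^ i * (|a| * (n + 2))) +
              2 ^ n * ((|a| * (n + 2)) ^ i * (|a| * (n + 2))) := by
            gcongr ?_ + ?_
            · gcongr
            · calc |a| * (n + 2) * (2 ^ n * (|a| * (n + 1)) ^ i)
                  = 2 ^ n * ((|a| * (n + 1)) ^ i * (|a| * (n + 2))) := by ring
                _ ≤ _ := by gcongr
        _ = 2 ^ (n + 1) * (|a| * ((n + 1 : ℕ) + 1)) ^ (i + 1) := by
            push_cast; ring

lemma sum_faaCoeff_succ (a y : ℝ) (f : ℕ → ℝ) (n : ℕ) :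
    ∑ i ∈ range (n + 2), faaCoeff a (n + 1) i * f (n + 1 - i) * y ^ (n + 1 - 2 * i) =
      ∑ i ∈ range (n + 1), faaCoeff a n i *
        (f (n - i + 1) * y * y ^ (n - 2 * i) +
          f (n - i) * ((n - 2 * i : ℕ) * y ^ (n - 2 * i - 1) * a)) := by
  have hfirst : ∑ i ∈ range (n + 2), faaCoeff a n i * f (n + 1 - i) * y ^ (n + 1 - 2 * i) =
      ∑ i ∈ range (n + 1), faaCoeff a n i * (f (n - i + 1) * y * y ^ (n - 2 * i)) := by
    rw [sum_range_succ, faaCoeff_eq_zero (by omega), zero_mul, zero_mul, add_zero]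
    refine sum_congr rfl fun i _ => ?_
    rcases le_or_gt (2 * i) n with h | h
    · rw [show n + 1 - i = n - i + 1 by omega, show n + 1 - 2 * i = n - 2 * i + 1 by omega]
      ring
    · rw [faaCoeff_eq_zero h]; ring
  have hsplit : ∑ i ∈ range (n + 2), faaCoeff a (n + 1) i * f (n + 1 - i) * y ^ (n + 1 - 2 * i) =
      ∑ i ∈ range (n + 2), faaCoeff a n i * f (n + 1 - i) * y ^ (n + 1 - 2 * i) +
      ∑ i ∈ range (n + 1),
        faaCoeff a n i * (f (n - i) * ((n - 2 * i : ℕ) * y ^ (n - 2 * i - 1) * a)) := by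
    rw [sum_range_succ' _ (n + 1), sum_range_succ' (fun i => faaCoeff a n i * _ * _) (n + 1)]
    rw [add_right_comm, ← sum_add_distrib]
    congr 1
    · refine sum_congr rfl fun i _ => ?_
      rw [show n + 1 - (i + 1) = n - i by omega, show n + 1 - 2 * (i + 1) = n - 2 * i - 1 by omega,
        faaCoeff]
      ring
    · simp [faaCoeff]
  rw [hsplit, hfirst, ← sum_add_distrib]
  exact sum_congr rfl fun i _ => by ring

section FaaDiBruno

variable {F : ℕ → ℝ → ℝ} {q q' : ℝ → ℝ} {a : ℝ}

noncomputable def faaDiBrunoSum (a : ℝ) (F : ℕ → ℝ → ℝ) (q q' : ℝ → ℝ) (n : ℕ) (t : ℝ) : ℝ :=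
  ∑ i ∈ range (n + 1), faaCoeff a n i * F (n - i) (q t) * q' t ^ (n - 2 * i)

lemma hasDerivAt_faaDiBrunoSum (hF : ∀ k w, HasDerivAt (F k) (F (k + 1) w) w)
    (hq : ∀ t, HasDerivAt q (q' t) t) (hq' : ∀ t, HasDerivAt q' a t) (n : ℕ) (t : ℝ) :
    HasDerivAt (faaDiBrunoSum a F q q' n) (faaDiBrunoSum a F q q' (n + 1) t) t := by
  rw [faaDiBrunoSum, sum_faaCoeff_succ a (q' t) (fun k => F k (q t)) n]
  refine HasDerivAt.fun_sum fun i _ => ?_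
  have hcomp : HasDerivAt (fun s => F (n - i) (q s)) (F (n - i + 1) (q t) * q' t) t :=
    (hF _ _).comp t (hq t)
  simpa only [mul_assoc] using (hcomp.fun_mul ((hq' t).fun_pow (n - 2 * i))).const_mul
    (faaCoeff a n i)

theorem iteratedDeriv_comp_eq_faaDiBrunoSum (hF : ∀ k w, HasDerivAt (F k) (F (k + 1) w) w)
    (hq : ∀ t, HasDerivAt q (q' t) t) (hq' : ∀ t, HasDerivAt q' a t) (n : ℕ) :
    iteratedDeriv n (fun t => F 0 (q t)) = faaDiBrunoSum a F q q' n := by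
  induction n with
  | zero => ext t; simp [faaDiBrunoSum, faaCoeff]
  | succ n ih =>
    ext t
    rw [iteratedDeriv_succ, ih, (hasDerivAt_faaDiBrunoSum hF hq hq' n t).deriv]

end FaaDiBruno

lemma abs_psiDeriv_mul_abs_pow_le {c : ℝ} (hc : c ≤ 1) (b t : ℝ) {n k j : ℕ} (hk : k ≤ n)
    (hj : j ≤ n) : |psiDeriv k (c - 25 * (t + b) ^ 2)| * |-50 * (t + b)| ^ j ≤
      (50 * (n + 1) : ℝ) ^ (3 * (k + 1)) * 10 ^ n := by
  rcases le_or_gt (c - 25 * (t + b) ^ 2) 0 with hw | hw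
  · rw [psiDeriv, if_neg hw.not_gt, abs_zero, zero_mul]; positivity
  have hq' : |-50 * (t + b)| ≤ 10 := by
    rw [abs_mul, abs_neg, abs_of_pos (by norm_num : (0 : ℝ) < 50)]
    nlinarith [abs_nonneg (t + b), sq_abs (t + b)]
  have hk' : (6 * (k + 1) : ℝ) ≤ 50 * (n + 1) := by
    have : (k : ℝ) ≤ n := by exact_mod_cast hk
    linarith
  gcongr
  · exact (abs_psiDeriv_le_pow k (by nlinarith)).trans (by gcongr)
  · exact (pow_le_pow_left₀ (abs_nonneg _) hq' j).trans (pow_le_pow_right₀ (by norm_num) hj)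

lemma abs_faaDiBrunoSum_psiDeriv_le {c : ℝ} (hc : c ≤ 1) (b : ℝ) (n : ℕ) (t : ℝ) :
    |faaDiBrunoSum (-50) psiDeriv (fun t => c - 25 * (t + b) ^ 2) (fun t => -50 * (t + b)) n t|
      ≤ (200 * (n + 1)) ^ (3 * (n + 1)) := by
  set N : ℝ := n + 1
  have hN : 1 ≤ N := by simp [N]
  have hterm : ∀ i ∈ range (n + 1),
      |faaCoeff (-50) n i * psiDeriv (n - i) (c - 25 * (t + b) ^ 2) * (-50 * (t + b)) ^ (n - 2 * i)|
        ≤ 20 ^ n * (50 * N) ^ (3 * (n + 1)) := by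
    intro i hi
    rcases le_or_gt (2 * i) n with h2i | h2i
    swap
    · rw [faaCoeff_eq_zero h2i, zero_mul, zero_mul, abs_zero]; positivity
    rw [abs_mul, abs_mul, abs_pow, mul_assoc]
    calc |faaCoeff (-50) n i| *
          (|psiDeriv (n - i) (c - 25 * (t + b) ^ 2)| * |-50 * (t + b)| ^ (n - 2 * i))
        ≤ (2 ^ n * (50 * N) ^ i) * ((50 * N) ^ (3 * (n - i + 1)) * 10 ^ n) := by
          refine mul_le_mul ?_ (abs_psiDeriv_mul_abs_pow_le hc b t (by omega) (by omega))
            (by positivity) (by positivity)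
          simpa [N] using abs_faaCoeff_le (-50) n i
      _ = 20 ^ n * (50 * N) ^ (i + 3 * (n - i + 1)) := by
          rw [pow_add, show (20 : ℝ) ^ n = 2 ^ n * 10 ^ n by rw [← mul_pow]; norm_num]; ring
      _ ≤ 20 ^ n * (50 * N) ^ (3 * (n + 1)) := by
          gcongr
          · linarith
          · omega
  calc _ ≤ ∑ i ∈ range (n + 1), 20 ^ n * (50 * N) ^ (3 * (n + 1)) :=
        (abs_sum_le_sum_abs _ _).trans (sum_le_sum hterm)
    _ = N * 20 ^ n * (50 * N) ^ (3 * (n + 1)) := by simp [N]; ring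
    _ ≤ 64 ^ (n + 1) * (50 * N) ^ (3 * (n + 1)) := by
        gcongr
        calc N * 20 ^ n ≤ 2 ^ (n + 1) * 20 ^ (n + 1) := by
              gcongr
              · simpa [N] using (show ((n + 1 : ℕ) : ℝ) ≤ ((2 ^ (n + 1) : ℕ) : ℝ) by
                  exact_mod_cast Nat.lt_two_pow_self.le)
              · norm_num
              · omega
          _ ≤ 64 ^ (n + 1) := by rw [← mul_pow]; gcongr; norm_num
    _ = (200 * N) ^ (3 * (n + 1)) := by
        rw [mul_pow, mul_pow 200, pow_mul (50 : ℝ), pow_mul (200 : ℝ), ← mul_assoc, ← mul_pow]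
        norm_num

lemma abs_iteratedDeriv_sub_le_psiDeriv_quadratic {c : ℝ} (hc : c ≤ 1) (b : ℝ) (p : ℕ) (t t' : ℝ) :
    |iteratedDeriv p (fun t => psiDeriv 0 (c - 25 * (t + b) ^ 2)) t -
        iteratedDeriv p (fun t => psiDeriv 0 (c - 25 * (t + b) ^ 2)) t'|
      ≤ (200 * ((p + 1 : ℕ) + 1 : ℝ)) ^ (3 * (p + 1 + 1)) * |t - t'| := by
  have hq (s : ℝ) : HasDerivAt (fun t => c - 25 * (t + b) ^ 2) (-50 * (s + b)) s := by
    refine ((((hasDerivAt_id' s).add_const b).fun_pow 2).const_mul 25 |>.const_sub c).congr_deriv ?_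
    push_cast; ring
  have hq' (s : ℝ) : HasDerivAt (fun t => -50 * (t + b)) (-50) s := by
    simpa using ((hasDerivAt_id' s).add_const b).const_mul (-50 : ℝ)
  have hG := iteratedDeriv_comp_eq_faaDiBrunoSum hasDerivAt_psiDeriv hq hq'
  refine abs_sub_le_of_abs_iteratedDeriv_succ_le ?_ (fun s => ?_) t t'
  · rw [hG]
    exact fun s => (hasDerivAt_faaDiBrunoSum hasDerivAt_psiDeriv hq hq' p s).differentiableAt
  · rw [hG]
    exact abs_faaDiBrunoSum_psiDeriv_le hc b (p + 1) s

lemma pow_le_exp_mul_log (p : ℕ) (hp : 1 ≤ p) :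
    (200 * ((p + 1 : ℕ) + 1 : ℝ)) ^ (3 * (p + 1 + 1)) ≤
      exp (3 * p * log p + log (64 * 600 ^ 9) * p) := by
  have hp' : (1 : ℝ) ≤ p := by exact_mod_cast hp
  have hexp : exp (3 * p * log p + log (64 * 600 ^ 9) * p) =
      (p : ℝ) ^ (3 * p) * (64 * 600 ^ 9) ^ p := by
    rw [exp_add, show 3 * (p : ℝ) * log p = ((3 * p : ℕ) : ℝ) * log p by push_cast; ring,
      mul_comm (log _), exp_nat_mul, exp_nat_mul, exp_log (by positivity), exp_log (by positivity)]
  have hp6 : (p : ℝ) ^ 6 ≤ 64 ^ p := by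
    calc (p : ℝ) ^ 6 ≤ ((2 : ℝ) ^ p) ^ 6 := by
          gcongr; exact_mod_cast Nat.lt_two_pow_self.le
      _ = 64 ^ p := by rw [← pow_mul, mul_comm, pow_mul]; norm_num
  rw [hexp]
  calc (200 * ((p + 1 : ℕ) + 1 : ℝ)) ^ (3 * (p + 1 + 1)) ≤ (600 * p : ℝ) ^ (3 * p + 6) := by
        push_cast
        rw [show 3 * (p + 1 + 1) = 3 * p + 6 by ring]
        exact pow_le_pow_left₀ (by positivity) (by linarith) _
    _ = 600 ^ (3 * p + 6) * (p ^ (3 * p) * p ^ 6) := by rw [mul_pow, pow_add (p : ℝ)]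
    _ ≤ 600 ^ (9 * p) * (p ^ (3 * p) * 64 ^ p) := by gcongr; norm_num; omega
    _ = (p : ℝ) ^ (3 * p) * (64 * 600 ^ 9) ^ p := by rw [mul_pow, pow_mul]; ring

lemma Psi_one : Psi 1 = 1 := by norm_num [Psi]

lemma Psi_nonneg (y : ℝ) : 0 ≤ Psi y := by
  unfold Psi; split_ifs <;> positivity

lemma Psi_le_one {y : ℝ} (hy : y ≤ 1) : Psi y ≤ 1 := by
  unfold Psi
  split_ifs with h
  · norm_num
  · rw [exp_le_one_iff, sub_nonpos, le_div_iff₀ (by nlinarith)]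
    nlinarith

lemma Psi_eq_zero_of_le {y : ℝ} (hy : y ≤ 1 / 2) : Psi y = 0 := if_pos hy

lemma dirFun_hbar_eq (T : ℕ) (hT : 1 ≤ T) (x : EuclideanSpace ℝ (Fin T))
    {v : EuclideanSpace ℝ (Fin T)} (hv : ‖v‖ = 1) : ∃ b c : ℝ, c ≤ 1 ∧
      dirFun (hbar T hT) x v = fun t => psiDeriv 0 (c - 25 * (t + b) ^ 2) := by
  set y := x - (4 / 5 : ℝ) • EuclideanSpace.single (⟨T - 1, by omega⟩ : Fin T) (1 : ℝ)
  have hcs : ⟪y, v⟫_ℝ ^ 2 ≤ ‖y‖ ^ 2 := by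
    simpa [hv] using pow_le_pow_left₀ (abs_nonneg _) (abs_real_inner_le_norm y v) 2
  refine ⟨⟪y, v⟫_ℝ, 1 - 25 * (‖y‖ ^ 2 - ⟪y, v⟫_ℝ ^ 2), by linarith, funext fun t => ?_⟩
  rw [dirFun, hbar, add_sub_right_comm, norm_add_smul_sq y hv,
    Psi_eq_psiDeriv_zero]
  ring_nf

lemma norm_sub_center_ge {T : ℕ} (hT : 1 ≤ T) {x : EuclideanSpace ℝ (Fin T)}
    (hx : x ⟨T - 1, by omega⟩ ≤ 3 / 5 ∨ 1 ≤ ‖x‖) :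
    1 / 5 ≤ ‖x - (4 / 5 : ℝ) • EuclideanSpace.single (⟨T - 1, by omega⟩ : Fin T) (1 : ℝ)‖ := by
  rcases hx with hx | hx
  · refine le_trans ?_ (PiLp.norm_apply_le _ ⟨T - 1, by omega⟩)
    simp only [PiLp.sub_apply, PiLp.smul_apply, PiLp.single_apply, if_true,
      smul_eq_mul, mul_one, Real.norm_eq_abs]
    rw [abs_sub_comm, abs_of_pos (by linarith)]
    linarith
  · have := norm_sub_norm_le x
      ((4 / 5 : ℝ) • EuclideanSpace.single (⟨T - 1, by omega⟩ : Fin T) (1 : ℝ))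
    rw [norm_smul, PiLp.norm_single] at this
    norm_num at this
    linarith

/-- (i) h̄_T((4/5)e^{(T)}) = 1 and 0 ≤ h̄_T ≤ 1; (ii) h̄_T(x) = 0 whenever x_T ≤ 3/5 or
‖x‖ ≥ 1; (iii) there is a numerical constant c, independent of T and p, such that the
p-th order derivatives of h̄_T are exp(3p·log p + c·p)-Lipschitz for every p ≥ 1. -/
theorem stmt18 :
    ∃ c : ℝ, ∀ (T : ℕ) (hT : 1 ≤ T),
      (hbar T hT ((4/5 : ℝ) • EuclideanSpace.single ⟨T-1, by omega⟩ 1) = 1 ∧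
        ∀ x, 0 ≤ hbar T hT x ∧ hbar T hT x ≤ 1) ∧
      (∀ x : EuclideanSpace ℝ (Fin T),
        (x ⟨T-1, by omega⟩ ≤ 3/5 ∨ 1 ≤ ‖x‖) → hbar T hT x = 0) ∧
      (∀ p : ℕ, 1 ≤ p →
        HasLipschitzDerivs p (Real.exp (3 * p * Real.log p + c * p)) (hbar T hT)) := by
  refine ⟨log (64 * 600 ^ 9), fun T hT => ⟨⟨?_, fun x => ⟨Psi_nonneg _, ?_⟩⟩, fun x hx => ?_,
    fun p hp x v hv t t' => ?_⟩⟩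
  · simp [hbar, Psi_one]
  · exact Psi_le_one (sub_le_self _ (by positivity))
  · exact Psi_eq_zero_of_le (by nlinarith [norm_sub_center_ge hT hx])
  · obtain ⟨b, c, hc, hdir⟩ := dirFun_hbar_eq T hT x hv
    rw [hdir]
    exact (abs_iteratedDeriv_sub_le_psiDeriv_quadratic hc b p t t').trans
      (by gcongr; exact pow_le_exp_mul_log p hp)
end
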